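/- arXiv:2002.08686 — 2 statements merged into one kernel-verified Lean document; each statement's English description precedes it below -/
import Mathlib

section
/- In the free group F_5, the four commutators [λ_{2,5},λ_{1,4}], [λ_{2,5},λ_{1,3}], [λ_{3,5},λ_{1,4}], [λ_{3,5},λ_{2,4}] all lie in the normal closure of the set {S_i(λ_{2,4}λ_{1,3}λ_{2,4}^{-1}λ_{1,3}^{-1}) : i = 0,1,2,3} ∪ CR(4), where S_i : F_4 → F_5 and CR(4) ⊆ F_5 via the canonical inclusion F_4 → F_5. -/
/-- The ambient free group with generators `λ i j` indexed by ordered pairs of naturals;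
the sub-free-group `F_m` is spanned by the generators `lam i j` with `1 ≤ i ≠ j ≤ m`,
and the canonical inclusion `F_m → F_{m'}` is the identity on generators. -/
abbrev FG : Type := FreeGroup (ℕ × ℕ)

/-- The generator `λ_{i,j}`. -/
def lam (i j : ℕ) : FG := FreeGroup.of (i, j)

/-- The commutativity relators `λ_{i,j} λ_{k,l} λ_{i,j}⁻¹ λ_{k,l}⁻¹` of `VP_m`,
for pairwise distinct indices `1 ≤ i, j, k, l ≤ m`. -/
def CR (m : ℕ) : Set FG :=
  {w | ∃ i j k l : ℕ,
    1 ≤ i ∧ i ≤ m ∧ 1 ≤ j ∧ j ≤ m ∧ 1 ≤ k ∧ k ≤ m ∧ 1 ≤ l ∧ l ≤ m ∧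
    i ≠ j ∧ i ≠ k ∧ i ≠ l ∧ j ≠ k ∧ j ≠ l ∧ k ≠ l ∧
    w = lam i j * lam k l * (lam i j)⁻¹ * (lam k l)⁻¹}

/-- The long relators `λ_{k,i} λ_{k,j} λ_{i,j} λ_{k,i}⁻¹ λ_{k,j}⁻¹ λ_{i,j}⁻¹` of `VP_m`,
for pairwise distinct indices `1 ≤ i, j, k ≤ m`. -/
def LongR (m : ℕ) : Set FG :=
  {w | ∃ i j k : ℕ,
    1 ≤ i ∧ i ≤ m ∧ 1 ≤ j ∧ j ≤ m ∧ 1 ≤ k ∧ k ≤ m ∧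
    i ≠ j ∧ i ≠ k ∧ j ≠ k ∧
    w = lam k i * lam k j * lam i j * (lam k i)⁻¹ * (lam k j)⁻¹ * (lam i j)⁻¹}

/-- The full relator set `R^V(m)` of the virtual pure braid group `VP_m`. -/
def RV (m : ℕ) : Set FG := CR m ∪ LongR m

/-- Value of `S_{i-1}` on a generator, given by the displayed case formulas:
for `k < l`, `S_{i-1}(λ_{k,l})` and `S_{i-1}(λ_{l,k})` according to the position of `i`
relative to `k` and `l`. -/
def Sgen (i : ℕ) (p : ℕ × ℕ) : FG :=
  if p.1 < p.2 then
    -- the generator is `λ_{k,l}` with `k = p.1 < l = p.2`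
    if i < p.1 then lam (p.1 + 1) (p.2 + 1)
    else if i = p.1 then lam p.1 (p.2 + 1) * lam (p.1 + 1) (p.2 + 1)
    else if i < p.2 then lam p.1 (p.2 + 1)
    else if i = p.2 then lam p.1 (p.2 + 1) * lam p.1 p.2
    else lam p.1 p.2
  else if p.2 < p.1 then
    -- the generator is `λ_{l,k}` with `k = p.2 < l = p.1`
    if i < p.2 then lam (p.1 + 1) (p.2 + 1)
    else if i = p.2 then lam (p.1 + 1) (p.2 + 1) * lam (p.1 + 1) p.2
    else if i < p.1 then lam (p.1 + 1) p.2
    else if i = p.1 then lam p.1 p.2 * lam (p.1 + 1) p.2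
    else lam p.1 p.2
  else lam p.1 p.2

/-- The free-group homomorphism `S_t = S_{(t+1)-1} : F_m → F_{m+1}` (doubling the
`(t+1)`-st strand), determined on generators by the displayed case formulas. -/
def Smap (t : ℕ) : FG →* FG := FreeGroup.lift (Sgen (t + 1))

/-- The relator `u * v⁻¹` of a relation `u = v`. -/
def relOf (u v : FG) : FG := u * v⁻¹

/-- The set `R_{i,j,k}` of the six long relators with indices in `{i, j, k}`. -/
def Rtriple (i j k : ℕ) : Set FG :=
  {relOf (lam i j * lam i k * lam j k) (lam j k * lam i k * lam i j),
   relOf (lam j i * lam j k * lam i k) (lam i k * lam j k * lam j i),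
   relOf (lam i k * lam i j * lam k j) (lam k j * lam i j * lam i k),
   relOf (lam k i * lam k j * lam i j) (lam i j * lam k j * lam k i),
   relOf (lam j k * lam j i * lam k i) (lam k i * lam j i * lam j k),
   relOf (lam k j * lam k i * lam j i) (lam j i * lam k i * lam k j)}

/-- The commutator `[a,b] = a⁻¹ b⁻¹ a b`. -/
def commE (a b : FG) : FG := a⁻¹ * b⁻¹ * a * b

/-- The automorphism of the free group induced by a permutation of the indices:
`λ_{i,j} ↦ λ_{σ(i),σ(j)}`. -/
def permF (σ : Equiv.Perm ℕ) : FG →* FG :=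
  FreeGroup.lift (fun p => lam (σ p.1) (σ p.2))

/-- The relator `λ_{2,4} λ_{1,3} λ_{2,4}⁻¹ λ_{1,3}⁻¹` of `F_4`. -/
def r7 : FG := lam 2 4 * lam 1 3 * (lam 2 4)⁻¹ * (lam 1 3)⁻¹

/-- The normal closure in `F_5` of `{S_i(λ_{2,4}λ_{1,3}λ_{2,4}⁻¹λ_{1,3}⁻¹) : i = 0,1,2,3} ∪ CR(4)`. -/
def N7 : Subgroup FG :=
  Subgroup.normalClosure ({Smap 0 r7, Smap 1 r7, Smap 2 r7, Smap 3 r7} ∪ CR 4)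

/-!
Pass to the quotient `FG ⧸ N7`, where a commutator relator becomes a commuting pair. Writing
`a, b, c, d, e` for the images of `λ_{2,5}, λ_{3,5}, λ_{1,4}, λ_{1,3}, λ_{2,4}`, the relator
`λ_{2,4}λ_{1,3}λ_{2,4}⁻¹λ_{1,3}⁻¹` lies in `CR(4)`, so `e` and `d` commute, and its four lifts say
that `a e` commutes with `d`, `a` with `c d`, `a b` with `c`, and `b` with `c e`. Peeling off one
known commuting factor at a time gives, in this order, that `a` commutes with `d`, `a` with `c`,
`b` with `c` and `b` with `e`.
-/

open scoped commutatorElement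

section CommuteCancel

variable {G : Type*} [Group G] {a b c : G}

theorem Commute.mul_left_iff_of_left (ha : Commute a c) : Commute (a * b) c ↔ Commute b c :=
  ⟨fun h => by simpa using ha.inv_left.mul_left h, ha.mul_left⟩

theorem Commute.mul_left_iff_of_right (hb : Commute b c) : Commute (a * b) c ↔ Commute a c :=
  ⟨fun h => by simpa using h.mul_left hb.inv_left, fun h => h.mul_left hb⟩

end CommuteCancel

theorem QuotientGroup.commutatorElement_mem_iff_commute {G : Type*} [Group G] {N : Subgroup G}
    [N.Normal] {x y : G} : ⁅x, y⁆ ∈ N ↔ Commute (x : G ⧸ N) y := by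
  rw [← QuotientGroup.eq_one_iff, ← QuotientGroup.mk'_apply, map_commutatorElement,
    commutatorElement_eq_one_iff_commute]
  rfl

theorem commE_eq_commutatorElement (x y : FG) : commE x y = ⁅x⁻¹, y⁻¹⁆ := by
  simp only [commE, commutatorElement_def, inv_inv]

theorem commE_mem_iff_commute {N : Subgroup FG} [N.Normal] {x y : FG} :
    commE x y ∈ N ↔ Commute (x : FG ⧸ N) y := by
  rw [commE_eq_commutatorElement, QuotientGroup.commutatorElement_mem_iff_commute,
    QuotientGroup.mk_inv, QuotientGroup.mk_inv, Commute.inv_inv_iff]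

theorem Smap_lam (t i j : ℕ) : Smap t (lam i j) = Sgen (t + 1) (i, j) :=
  FreeGroup.lift_apply_of

theorem r7_eq_commutatorElement : r7 = ⁅lam 2 4, lam 1 3⁆ := rfl

theorem r7_mem_CR : r7 ∈ CR 4 := ⟨2, 4, 1, 3, by norm_num [r7]⟩

theorem Smap_zero_r7 : Smap 0 r7 = ⁅lam 3 5, lam 1 4 * lam 2 4⁆ := by
  simp [r7_eq_commutatorElement, map_commutatorElement, Smap_lam, Sgen]

theorem Smap_one_r7 : Smap 1 r7 = ⁅lam 2 5 * lam 3 5, lam 1 4⁆ := by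
  simp [r7_eq_commutatorElement, map_commutatorElement, Smap_lam, Sgen]

theorem Smap_two_r7 : Smap 2 r7 = ⁅lam 2 5, lam 1 4 * lam 1 3⁆ := by
  simp [r7_eq_commutatorElement, map_commutatorElement, Smap_lam, Sgen]

theorem Smap_three_r7 : Smap 3 r7 = ⁅lam 2 5 * lam 2 4, lam 1 3⁆ := by
  simp [r7_eq_commutatorElement, map_commutatorElement, Smap_lam, Sgen]

theorem comms_from_lifting_24_13 :
    commE (lam 2 5) (lam 1 4) ∈ N7 ∧ commE (lam 2 5) (lam 1 3) ∈ N7 ∧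
    commE (lam 3 5) (lam 1 4) ∈ N7 ∧ commE (lam 3 5) (lam 2 4) ∈ N7 := by
  have : N7.Normal := Subgroup.normalClosure_normal
  have rel : ∀ {x y : FG}, ⁅x, y⁆ ∈ N7 → Commute (x : FG ⧸ N7) y :=
    QuotientGroup.commutatorElement_mem_iff_commute.mp
  have gen : ∀ w : FG, w ∈ {Smap 0 r7, Smap 1 r7, Smap 2 r7, Smap 3 r7} ∪ CR 4 → w ∈ N7 :=
    fun _ hw => Subgroup.subset_normalClosure hw
  have hed : Commute (lam 2 4 : FG ⧸ N7) (lam 1 3) := rel (gen r7 (Or.inr r7_mem_CR))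
  have hS0 := rel (Smap_zero_r7 ▸ gen (Smap 0 r7) (by simp))
  have hS1 := rel (Smap_one_r7 ▸ gen (Smap 1 r7) (by simp))
  have hS2 := rel (Smap_two_r7 ▸ gen (Smap 2 r7) (by simp))
  have hS3 := rel (Smap_three_r7 ▸ gen (Smap 3 r7) (by simp))
  simp only [QuotientGroup.mk_mul] at hS0 hS1 hS2 hS3
  have had := hed.mul_left_iff_of_right.mp hS3
  have hca := had.symm.mul_left_iff_of_right.mp hS2.symm
  have hbc := hca.symm.mul_left_iff_of_left.mp hS1
  have heb := hbc.symm.mul_left_iff_of_left.mp hS0.symm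
  simp only [commE_mem_iff_commute]
  exact ⟨hca.symm, had, hbc, heb.symm⟩
end

section
/- In the free group F_5, the four commutators [λ_{2,5},λ_{3,1}], [λ_{2,5},λ_{4,1}], [λ_{3,5},λ_{4,1}], [λ_{3,5},λ_{4,2}] all lie in the normal closure of the set {S_i(λ_{2,4}λ_{3,1}λ_{2,4}^{-1}λ_{3,1}^{-1}) : i = 0,1,2,3} ∪ CR(4), where S_i : F_4 → F_5 and CR(4) ⊆ F_5 via the canonical inclusion F_4 → F_5. -/
/-- The relator `λ_{2,4} λ_{3,1} λ_{2,4}⁻¹ λ_{3,1}⁻¹` of `F_4`. -/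
def r10 : FG := lam 2 4 * lam 3 1 * (lam 2 4)⁻¹ * (lam 3 1)⁻¹

/-- The normal closure in `F_5` of `{S_i(λ_{2,4}λ_{3,1}λ_{2,4}⁻¹λ_{3,1}⁻¹) : i = 0,1,2,3} ∪ CR(4)`. -/
def N10 : Subgroup FG :=
  Subgroup.normalClosure ({Smap 0 r10, Smap 1 r10, Smap 2 r10, Smap 3 r10} ∪ CR 4)

/-!
Work in `FG ⧸ N10`, where a relator `⁅u, v⁆` becomes the relation that `u` and `v` commute.
The four lifted relators say that `λ₂₅λ₂₄ ⇄ λ₃₁`, `λ₂₅ ⇄ λ₃₁λ₄₁`, `λ₂₅λ₃₅ ⇄ λ₄₁` and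
`λ₃₅ ⇄ λ₄₂λ₄₁`. Starting from `λ₂₄ ⇄ λ₃₁` in `CR(4)`, each of them in turn loses a factor that is
already known to commute, which yields the four commutations of the statement.
-/

open scoped commutatorElement

theorem Commute.left_of_mul {G : Type*} [Group G] {a b c : G} (h : Commute (a * b) c)
    (hb : Commute b c) : Commute a c := by
  simpa using h.mul_left hb.inv_left

theorem Commute.right_of_mul {G : Type*} [Group G] {a b c : G} (h : Commute (a * b) c)
    (ha : Commute a c) : Commute b c := by
  simpa using ha.inv_left.mul_left h

theorem QuotientGroup.commute_mk_iff {G : Type*} [Group G] (N : Subgroup G) [N.Normal]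
    {a b : G} : Commute (a : G ⧸ N) b ↔ ⁅a, b⁆ ∈ N := by
  rw [← commutatorElement_eq_one_iff_commute, ← QuotientGroup.eq_one_iff]
  rfl

theorem commE_eq_commutatorElement_s10 (a b : FG) : commE a b = ⁅a⁻¹, b⁻¹⁆ := by
  simp [commE, commutatorElement_def]

instance N10.normal : N10.Normal := Subgroup.normalClosure_normal

theorem commE_mem_N10_iff {a b : FG} : commE a b ∈ N10 ↔ Commute (a : FG ⧸ N10) b := by
  rw [commE_eq_commutatorElement_s10, ← QuotientGroup.commute_mk_iff, QuotientGroup.mk_inv,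
    QuotientGroup.mk_inv, Commute.inv_inv_iff]

theorem Smap_zero_r10 : Smap 0 r10 = ⁅lam 3 5, lam 4 2 * lam 4 1⁆ := by
  simp [Smap, r10, Sgen, lam, commutatorElement_def]

theorem Smap_one_r10 : Smap 1 r10 = ⁅lam 2 5 * lam 3 5, lam 4 1⁆ := by
  simp [Smap, r10, Sgen, lam, commutatorElement_def]

theorem Smap_two_r10 : Smap 2 r10 = ⁅lam 2 5, lam 3 1 * lam 4 1⁆ := by
  simp [Smap, r10, Sgen, lam, commutatorElement_def]

theorem Smap_three_r10 : Smap 3 r10 = ⁅lam 2 5 * lam 2 4, lam 3 1⁆ := by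
  simp [Smap, r10, Sgen, lam, commutatorElement_def]

theorem commute_mk_N10_of_Smap_r10_eq {i : ℕ} (hi : i ≤ 3) {u v : FG}
    (h : Smap i r10 = ⁅u, v⁆) : Commute (u : FG ⧸ N10) v := by
  rw [QuotientGroup.commute_mk_iff, ← h]
  apply Subgroup.subset_normalClosure
  left
  interval_cases i <;> simp

theorem comms_from_lifting_24_31 :
    commE (lam 2 5) (lam 3 1) ∈ N10 ∧ commE (lam 2 5) (lam 4 1) ∈ N10 ∧
    commE (lam 3 5) (lam 4 1) ∈ N10 ∧ commE (lam 3 5) (lam 4 2) ∈ N10 := by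
  simp only [commE_mem_N10_iff]
  have h24_31 : Commute (lam 2 4 : FG ⧸ N10) (lam 3 1) :=
    (QuotientGroup.commute_mk_iff N10).2 <|
      Subgroup.subset_normalClosure (Or.inr ⟨2, 4, 3, 1, by norm_num [commutatorElement_def]⟩)
  have h0 := commute_mk_N10_of_Smap_r10_eq (by norm_num) Smap_zero_r10
  have h1 := commute_mk_N10_of_Smap_r10_eq (by norm_num) Smap_one_r10
  have h2 := commute_mk_N10_of_Smap_r10_eq (by norm_num) Smap_two_r10
  have h3 := commute_mk_N10_of_Smap_r10_eq (by norm_num) Smap_three_r10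
  simp only [QuotientGroup.mk_mul] at h0 h1 h2 h3
  have h25_31 := h3.left_of_mul h24_31
  have h25_41 := (h2.symm.right_of_mul h25_31.symm).symm
  have h35_41 := h1.right_of_mul h25_41
  have h35_42 := (h0.symm.left_of_mul h35_41.symm).symm
  exact ⟨h25_31, h25_41, h35_41, h35_42⟩
end
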